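/- (Lemma 1, one-step gap reduction.) Let V⁰ ∈ S and suppose every entry of the unit eigenvector u₁(V⁰) of (V⁰)ᵀV⁰ for its largest eigenvalue is nonzero. Define μ := min over 1 ≤ j ≤ p of |u₁(V⁰)_j| > 0 and ϖ := (L + 2L_f̃)√p + ‖∇f̃(E/√m)‖_F, where E is the m×p all-ones matrix. Let c₀ ∈ (0,1) and assume ρ ≥ (Lp + ϖ)/(μ c₀). Then every column of G(V⁰) is nonzero, and the algorithmic update V¹ := Proj_S(G(V⁰)) satisfies ‖V¹‖_F² − ‖V¹‖² ≤ c₀². -/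

import Mathlib

/-!
Write `G(V⁰) = (2ρ + L)⁻¹ H`. With `z = V⁰u`, `‖z‖² = λ ≥ ‖V⁰e_j‖² = 1` (Rayleigh bound), and
the `j`-th column of `H` is `h_j = r_j + 2ρ u_j z`, where `r_j` is the `j`-th column of
`L V⁰ - ∇f̃(V⁰)`. By the Lipschitz bound around `E/√m`, `Σ_j ‖r_j‖² ≤ ϖ²`. So, along the
unit vector `w = z/√λ`, each `h_j` has a component of size at least `2ρμ` and a remainder of norm
at most `ϖ`: hence `‖h_j‖ ≥ 2ρμ - ϖ`, and the normalized column `v_j` satisfies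
`1 - ⟨v_j, w⟩² ≤ ‖r_j‖² / (2ρμ - ϖ)²`. As `‖V¹‖_F² = p` and `‖V¹‖² ≥ ‖V¹ᵀw‖² = Σ_j ⟨v_j, w⟩²`,
the gap is at most `ϖ² / (2ρμ - ϖ)²`, which the choice of `ρ` makes at most `c₀²`.
-/

open Matrix

noncomputable section

/-- Squared Frobenius norm `‖A‖_F²`. -/
def frobSq {a b : ℕ} (A : Matrix (Fin a) (Fin b) ℝ) : ℝ := ∑ i, ∑ j, A i j ^ 2

/-- Frobenius norm `‖A‖_F`. -/
def frobNorm {a b : ℕ} (A : Matrix (Fin a) (Fin b) ℝ) : ℝ := Real.sqrt (frobSq A)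

/-- Trace (Frobenius) inner product `⟨A,B⟩ = tr(AᵀB)`. -/
def frobInner {a b : ℕ} (A B : Matrix (Fin a) (Fin b) ℝ) : ℝ := ∑ i, ∑ j, A i j * B i j

/-- Squared spectral norm: `sup {‖Vx‖₂² : ‖x‖₂ = 1}`. -/
def specSq {a b : ℕ} (V : Matrix (Fin a) (Fin b) ℝ) : ℝ :=
  sSup {c | ∃ x : Fin b → ℝ, (∑ j, x j ^ 2) = 1 ∧ c = ∑ i, (∑ j, V i j * x j) ^ 2}

/-- Spectral norm (largest singular value). -/
def specNorm {a b : ℕ} (V : Matrix (Fin a) (Fin b) ℝ) : ℝ := Real.sqrt (specSq V)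

/-- Membership in `S`: all columns have unit Euclidean norm. -/
def unitCols {a b : ℕ} (V : Matrix (Fin a) (Fin b) ℝ) : Prop :=
  ∀ j, ∑ i, V i j ^ 2 = 1

/-- Column-wise normalization to unit Euclidean norm (projection onto `S`). -/
def normalizeCols {a b : ℕ} (G : Matrix (Fin a) (Fin b) ℝ) : Matrix (Fin a) (Fin b) ℝ :=
  Matrix.of fun i j => G i j / Real.sqrt (∑ i', G i' j ^ 2)

/-- `u` is a unit eigenvector of `VᵀV` associated with its largest eigenvalue `lam`
(the Rayleigh-quotient bound states that `lam` is the largest eigenvalue). -/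
def isTopEigen {a b : ℕ} (V : Matrix (Fin a) (Fin b) ℝ) (lam : ℝ) (u : Fin b → ℝ) : Prop :=
  (∑ j, u j ^ 2) = 1 ∧ (Vᵀ * V) *ᵥ u = lam • u ∧
    ∀ x : Fin b → ℝ, x ⬝ᵥ ((Vᵀ * V) *ᵥ x) ≤ lam * (x ⬝ᵥ x)

/-- `Γ(V) = −2 V u uᵀ` where `u = u₁(V)`. -/
def GammaOf {a b : ℕ} (V : Matrix (Fin a) (Fin b) ℝ) (u : Fin b → ℝ) :
    Matrix (Fin a) (Fin b) ℝ := (-2 : ℝ) • (V * vecMulVec u u)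

/-- The update direction `G(V) = (2ρ+L)⁻¹ (L V − ∇f̃(V) − ρ Γ(V))`. -/
def Gmap {a b : ℕ} (gradf : Matrix (Fin a) (Fin b) ℝ → Matrix (Fin a) (Fin b) ℝ)
    (ρ L : ℝ) (V : Matrix (Fin a) (Fin b) ℝ) (u : Fin b → ℝ) : Matrix (Fin a) (Fin b) ℝ :=
  (2 * ρ + L)⁻¹ • (L • V - gradf V - ρ • GammaOf V u)

/-- Penalized objective `Φ_ρ(V) = f̃(V) + ρ(‖V‖_F² − ‖V‖²)`. -/
def Phi {a b : ℕ} (f : Matrix (Fin a) (Fin b) ℝ → ℝ) (ρ : ℝ)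
    (V : Matrix (Fin a) (Fin b) ℝ) : ℝ := f V + ρ * (frobSq V - specSq V)

/-- Stationarity residual `𝒢_ρ(V,Γ) = inf_t ‖∇f̃(V) + 2ρV + ρΓ + V·Diag(t)‖_F`. -/
def Gres {a b : ℕ} (gradf : Matrix (Fin a) (Fin b) ℝ → Matrix (Fin a) (Fin b) ℝ) (ρ : ℝ)
    (V Γ : Matrix (Fin a) (Fin b) ℝ) : ℝ :=
  ⨅ t : Fin b → ℝ, frobNorm (gradf V + (2 * ρ) • V + ρ • Γ + V * Matrix.diagonal t)

/-- The all-ones matrix `E` scaled by `1/√m`. -/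
def Escaled (a b : ℕ) : Matrix (Fin a) (Fin b) ℝ :=
  (Real.sqrt a)⁻¹ • Matrix.of fun _ _ => (1 : ℝ)

attribute [local instance] Matrix.frobeniusNormedAddCommGroup Matrix.frobeniusNormedSpace

/-- The continuous linear functional `W ↦ ⟨A, W⟩` (Frobenius pairing); used to state that
`∇f̃` is the gradient of `f̃` with respect to the trace inner product. -/
def frobCLM {a b : ℕ} (A : Matrix (Fin a) (Fin b) ℝ) :
    Matrix (Fin a) (Fin b) ℝ →L[ℝ] ℝ :=
  LinearMap.toContinuousLinearMap
    { toFun := fun W => frobInner A W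
      map_add' := fun W W' => by
        simp [frobInner, Matrix.add_apply, mul_add, Finset.sum_add_distrib]
      map_smul' := fun c W => by
        simp [frobInner, Matrix.smul_apply, smul_eq_mul, Finset.mul_sum, mul_left_comm] }


open scoped RealInnerProductSpace

section Geometry

variable {F : Type*} [NormedAddCommGroup F] [InnerProductSpace ℝ F]

theorem norm_add_smul_sq_sub_inner_sq_le {w : F} (hw : ‖w‖ = 1) (r : F) (a : ℝ) :
    ‖r + a • w‖ ^ 2 - ⟪r + a • w, w⟫ ^ 2 ≤ ‖r‖ ^ 2 := by
  rw [norm_add_sq_real, inner_add_left, inner_smul_left, inner_smul_right,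
    real_inner_self_eq_norm_sq, norm_smul, hw]
  simp only [RCLike.conj_to_real, Real.norm_eq_abs, mul_one, one_pow, sq_abs]
  nlinarith [sq_nonneg ⟪r, w⟫]

theorem one_sub_inner_normalize_sq_le {w : F} (hw : ‖w‖ = 1) (h : F) (a : ℝ) {D : ℝ}
    (hD : 0 < D) (hDh : D ≤ ‖h‖) :
    1 - ⟪‖h‖⁻¹ • h, w⟫ ^ 2 ≤ ‖h - a • w‖ ^ 2 / D ^ 2 := by
  have hh : 0 < ‖h‖ := hD.trans_le hDh
  have key := norm_add_smul_sq_sub_inner_sq_le hw (h - a • w) a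
  rw [sub_add_cancel] at key
  calc 1 - ⟪‖h‖⁻¹ • h, w⟫ ^ 2 = (‖h‖ ^ 2 - ⟪h, w⟫ ^ 2) / ‖h‖ ^ 2 := by
        rw [real_inner_smul_left]; field_simp
    _ ≤ ‖h - a • w‖ ^ 2 / ‖h‖ ^ 2 := by gcongr
    _ ≤ ‖h - a • w‖ ^ 2 / D ^ 2 := by gcongr

end Geometry

section Columns

variable {a b : ℕ}

def colVec (A : Matrix (Fin a) (Fin b) ℝ) (j : Fin b) : EuclideanSpace ℝ (Fin a) :=
  WithLp.toLp 2 fun i => A i j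

theorem norm_colVec_sq (A : Matrix (Fin a) (Fin b) ℝ) (j : Fin b) :
    ‖colVec A j‖ ^ 2 = ∑ i, A i j ^ 2 :=
  EuclideanSpace.real_norm_sq_eq _

theorem frobSq_eq_sum_norm_colVec_sq (A : Matrix (Fin a) (Fin b) ℝ) :
    frobSq A = ∑ j, ‖colVec A j‖ ^ 2 := by
  simp only [frobSq, norm_colVec_sq]
  exact Finset.sum_comm

theorem frobNorm_eq_norm (A : Matrix (Fin a) (Fin b) ℝ) : frobNorm A = ‖A‖ := by
  rw [frobNorm, frobSq, Matrix.frobenius_norm_def, Real.sqrt_eq_rpow]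
  simp

theorem frobSq_eq_norm_sq (A : Matrix (Fin a) (Fin b) ℝ) : frobSq A = ‖A‖ ^ 2 := by
  rw [← frobNorm_eq_norm, frobNorm, Real.sq_sqrt]
  exact Finset.sum_nonneg fun i _ => Finset.sum_nonneg fun j _ => sq_nonneg _

theorem norm_colVec_le (A : Matrix (Fin a) (Fin b) ℝ) (j : Fin b) : ‖colVec A j‖ ≤ ‖A‖ := by
  refine (pow_le_pow_iff_left₀ (norm_nonneg _) (norm_nonneg _) two_ne_zero).1 ?_
  rw [← frobSq_eq_norm_sq, frobSq_eq_sum_norm_colVec_sq]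
  exact Finset.single_le_sum (fun j _ => sq_nonneg ‖colVec A j‖) (Finset.mem_univ j)

theorem frobSq_of_unitCols {V : Matrix (Fin a) (Fin b) ℝ} (hV : unitCols V) : frobSq V = b := by
  simp [frobSq_eq_sum_norm_colVec_sq, norm_colVec_sq, hV _]

theorem frobSq_Escaled (ha : 0 < a) : frobSq (Escaled a b) = b := by
  have ha' : (a : ℝ) ≠ 0 := by positivity
  simp only [frobSq, Escaled, Matrix.smul_apply, of_apply, smul_eq_mul, mul_one, inv_pow,
    Real.sq_sqrt (Nat.cast_nonneg a), Finset.sum_const, Finset.card_univ, Fintype.card_fin,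
    nsmul_eq_mul]
  field_simp

theorem colVec_normalizeCols (G : Matrix (Fin a) (Fin b) ℝ) (j : Fin b) :
    colVec (normalizeCols G) j = ‖colVec G j‖⁻¹ • colVec G j := by
  ext i
  simp [colVec, normalizeCols, EuclideanSpace.norm_eq, div_eq_inv_mul]

theorem normalizeCols_smul {c : ℝ} (hc : 0 < c) (G : Matrix (Fin a) (Fin b) ℝ) :
    normalizeCols (c • G) = normalizeCols G := by
  ext i j
  simp only [normalizeCols, Matrix.of_apply, Matrix.smul_apply, smul_eq_mul, mul_pow,
    ← Finset.mul_sum, Real.sqrt_mul (sq_nonneg c), Real.sqrt_sq hc.le]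
  exact mul_div_mul_left _ _ hc.ne'

theorem Gmap_eq_smul_add_vecMulVec
    (gradf : Matrix (Fin a) (Fin b) ℝ → Matrix (Fin a) (Fin b) ℝ) (ρ L : ℝ)
    (V : Matrix (Fin a) (Fin b) ℝ) (u : Fin b → ℝ) :
    Gmap gradf ρ L V u =
      (2 * ρ + L)⁻¹ • (L • V - gradf V + vecMulVec (V *ᵥ u) ((2 * ρ) • u)) := by
  rw [Gmap, GammaOf, ← mul_vecMulVec, vecMulVec_smul, Matrix.mul_smul, smul_smul]
  congr 1
  module

theorem isTopEigen.sum_mulVec_sq {V : Matrix (Fin a) (Fin b) ℝ} {lam : ℝ} {u : Fin b → ℝ}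
    (h : isTopEigen V lam u) : ∑ i, (V *ᵥ u) i ^ 2 = lam := by
  obtain ⟨hu, hVu, -⟩ := h
  calc ∑ i, (V *ᵥ u) i ^ 2 = (V *ᵥ u) ⬝ᵥ (V *ᵥ u) := by simp [dotProduct, sq]
    _ = u ⬝ᵥ ((Vᵀ * V) *ᵥ u) := by
        rw [← Matrix.mulVec_mulVec, Matrix.mulVec_transpose, dotProduct_comm u,
          Matrix.dotProduct_mulVec]
    _ = lam := by
        rw [hVu, dotProduct_smul, smul_eq_mul]
        simp only [dotProduct, ← sq, hu, mul_one]

theorem isTopEigen.one_le [Nonempty (Fin b)] {V : Matrix (Fin a) (Fin b) ℝ} {lam : ℝ}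
    {u : Fin b → ℝ} (hV : unitCols V) (h : isTopEigen V lam u) : 1 ≤ lam := by
  obtain j : Fin b := Classical.arbitrary _
  simpa [Matrix.mulVec_single_one, Matrix.mul_apply, ← sq, hV j] using h.2.2 (Pi.single j 1)

theorem sum_inner_colVec_sq_le_specSq (V : Matrix (Fin a) (Fin b) ℝ)
    {w : EuclideanSpace ℝ (Fin a)} (hw : ‖w‖ = 1) :
    ∑ j, ⟪colVec V j, w⟫ ^ 2 ≤ specSq V := by
  have hbdd : BddAbove
      {c | ∃ x : Fin b → ℝ, ∑ j, x j ^ 2 = 1 ∧ c = ∑ i, (∑ j, V i j * x j) ^ 2} := by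
    refine ⟨frobSq V, ?_⟩
    rintro _ ⟨x, hx, rfl⟩
    refine Finset.sum_le_sum fun i _ => ?_
    simpa [hx] using Finset.sum_mul_sq_le_sq_mul_sq Finset.univ (fun j => V i j) x
  set y : Fin b → ℝ := fun j => ⟪colVec V j, w⟫
  have hy : ∀ j, y j = ∑ i, w i * V i j := fun j => by simp [y, colVec, PiLp.inner_apply]
  rcases (Finset.sum_nonneg fun j _ => sq_nonneg (y j)).eq_or_lt with hy0 | hypos
  · rw [← hy0]
    refine Real.sSup_nonneg ?_
    rintro _ ⟨x, -, rfl⟩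
    positivity
  set s := √(∑ j, y j ^ 2)
  have hs : 0 < s := Real.sqrt_pos.2 hypos
  have hx : ∑ j, (y j / s) ^ 2 = 1 := by
    simp only [div_pow, ← Finset.sum_div, s, Real.sq_sqrt hypos.le, div_self hypos.ne']
  -- test vector `x = Vᵀw / ‖Vᵀw‖`, for which `‖V x‖ ≥ ⟪w, V x⟫ = ‖Vᵀw‖` by Cauchy–Schwarz
  refine le_csSup_of_le hbdd ⟨fun j => y j / s, hx, rfl⟩ ?_
  have hw' : ∑ i, w i ^ 2 = 1 := by rw [← EuclideanSpace.real_norm_sq_eq, hw, one_pow]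
  have hpair : ∑ i, w i * ∑ j, V i j * (y j / s) = s := by
    calc ∑ i, w i * ∑ j, V i j * (y j / s) = ∑ j, ∑ i, w i * (V i j * (y j / s)) := by
          simp only [Finset.mul_sum]
          exact Finset.sum_comm
      _ = ∑ j, y j ^ 2 / s := by
          refine Finset.sum_congr rfl fun j _ => ?_
          rw [sq, mul_div_assoc, hy, Finset.sum_mul]
          exact Finset.sum_congr rfl fun i _ => by ring
      _ = s := by
          rw [← Finset.sum_div, ← Real.sq_sqrt hypos.le, sq, mul_div_cancel_right₀ _ hs.ne']
  have := Finset.sum_mul_sq_le_sq_mul_sq Finset.univ (fun i => w i)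
    (fun i => ∑ j, V i j * (y j / s))
  rw [hpair, hw', one_mul, Real.sq_sqrt hypos.le] at this
  exact this

theorem frobSq_sub_specSq_normalizeCols_le (H : Matrix (Fin a) (Fin b) ℝ)
    {w : EuclideanSpace ℝ (Fin a)} (hw : ‖w‖ = 1) (c : Fin b → ℝ) {D : ℝ} (hD : 0 < D)
    (hcol : ∀ j, D ≤ |c j| - ‖colVec H j - c j • w‖) :
    (∀ j, ∃ i, H i j ≠ 0) ∧
      frobSq (normalizeCols H) - specSq (normalizeCols H) ≤
        (∑ j, ‖colVec H j - c j • w‖ ^ 2) / D ^ 2 := by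
  have hnorm : ∀ j, D ≤ ‖colVec H j‖ := fun j => by
    have := norm_sub_norm_le (c j • w) (colVec H j)
    rw [norm_smul, hw, mul_one, Real.norm_eq_abs, norm_sub_rev] at this
    linarith [hcol j]
  refine ⟨fun j => ?_, ?_⟩
  · by_contra! hzero
    have h0 : colVec H j = 0 := by ext i; simp [colVec, hzero]
    exact (hD.trans_le (hnorm j)).ne' (by rw [h0, norm_zero])
  have hfrob : frobSq (normalizeCols H) = ∑ _j : Fin b, (1 : ℝ) := by
    refine (frobSq_eq_sum_norm_colVec_sq _).trans (Finset.sum_congr rfl fun j _ => ?_)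
    rw [colVec_normalizeCols, norm_smul, norm_inv, norm_norm,
      inv_mul_cancel₀ (hD.trans_le (hnorm j)).ne', one_pow]
  have hspec := sum_inner_colVec_sq_le_specSq (normalizeCols H) hw
  simp only [colVec_normalizeCols] at hspec
  calc frobSq (normalizeCols H) - specSq (normalizeCols H)
      ≤ ∑ j, (1 - ⟪‖colVec H j‖⁻¹ • colVec H j, w⟫ ^ 2) := by
        rw [Finset.sum_sub_distrib, hfrob]; linarith
    _ ≤ ∑ j, ‖colVec H j - c j • w‖ ^ 2 / D ^ 2 :=
        Finset.sum_le_sum fun j _ => one_sub_inner_normalize_sq_le hw _ _ hD (hnorm j)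
    _ = (∑ j, ‖colVec H j - c j • w‖ ^ 2) / D ^ 2 := (Finset.sum_div ..).symm

theorem frobSq_sub_specSq_normalizeCols_add_vecMulVec_le (R : Matrix (Fin a) (Fin b) ℝ)
    (z : Fin a → ℝ) (c : Fin b → ℝ) {s B K : ℝ} (hz : ∑ i, z i ^ 2 = s ^ 2) (hs : 0 < s)
    (hR : ‖R‖ ≤ B) (hc : ∀ j, K ≤ s * |c j|) (hBK : B < K) :
    (∀ j, ∃ i, (R + vecMulVec z c) i j ≠ 0) ∧
      frobSq (normalizeCols (R + vecMulVec z c)) - specSq (normalizeCols (R + vecMulVec z c)) ≤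
        B ^ 2 / (K - B) ^ 2 := by
  set w : EuclideanSpace ℝ (Fin a) := s⁻¹ • WithLp.toLp 2 z
  have hw : ‖w‖ = 1 := by
    have hz' : ‖(WithLp.toLp 2 z : EuclideanSpace ℝ (Fin a))‖ = s := by
      rw [← sq_eq_sq₀ (norm_nonneg _) hs.le, EuclideanSpace.real_norm_sq_eq, hz]
    rw [norm_smul, hz', norm_inv, Real.norm_of_nonneg hs.le, inv_mul_cancel₀ hs.ne']
  have hcol : ∀ j, colVec (R + vecMulVec z c) j - (s * c j) • w = colVec R j := fun j => by
    ext i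
    simp only [colVec, Matrix.add_apply, vecMulVec_apply, PiLp.sub_apply, PiLp.smul_apply,
      smul_eq_mul, w]
    field_simp
    ring
  obtain ⟨hne, hle⟩ := frobSq_sub_specSq_normalizeCols_le (R + vecMulVec z c) hw
    (fun j => s * c j) (sub_pos.2 hBK) fun j => by
      rw [hcol, abs_mul, abs_of_pos hs]
      linarith [hc j, (norm_colVec_le R j).trans hR]
  refine ⟨hne, hle.trans ?_⟩
  simp only [hcol]
  rw [← frobSq_eq_sum_norm_colVec_sq, frobSq_eq_norm_sq]
  have hB : 0 ≤ B := (norm_nonneg R).trans hR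
  gcongr

end Columns

theorem iInf_abs_pos {ι : Type*} [Finite ι] [Nonempty ι] {u : ι → ℝ} (hu : ∀ i, u i ≠ 0) :
    0 < ⨅ i, |u i| := by
  obtain ⟨i, hi⟩ := exists_eq_ciInf_of_finite (f := fun i => |u i|)
  exact hi ▸ abs_pos.2 (hu i)

theorem norm_smul_sub_le_of_lipschitz {m p : ℕ} (hm : 0 < m)
    {gradf : Matrix (Fin m) (Fin p) ℝ → Matrix (Fin m) (Fin p) ℝ} {Lf : ℝ} (hLf : 0 ≤ Lf)
    (hlip : ∀ W W' : Matrix (Fin m) (Fin p) ℝ,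
      frobNorm (gradf W - gradf W') ≤ Lf * frobNorm (W - W'))
    {V : Matrix (Fin m) (Fin p) ℝ} (hV : unitCols V) {L : ℝ} (hL : 0 ≤ L) :
    ‖L • V - gradf V‖ ≤ (L + 2 * Lf) * √p + ‖gradf (Escaled m p)‖ := by
  set E := Escaled m p
  have hVnorm : ‖V‖ = √p := by rw [← frobNorm_eq_norm, frobNorm, frobSq_of_unitCols hV]
  have hEnorm : ‖E‖ = √p := by rw [← frobNorm_eq_norm, frobNorm, frobSq_Escaled hm]
  have hlipVE : ‖gradf V - gradf E‖ ≤ Lf * (2 * √p) := by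
    have := hlip V E
    simp only [frobNorm_eq_norm] at this
    refine this.trans (mul_le_mul_of_nonneg_left ?_ hLf)
    linarith [norm_sub_le V E]
  calc ‖L • V - gradf V‖ ≤ ‖L • V‖ + ‖gradf V - gradf E‖ + ‖gradf E‖ := by
        refine (norm_sub_le _ _).trans ?_
        linarith [norm_le_norm_sub_add (gradf V) (gradf E)]
    _ ≤ L * √p + Lf * (2 * √p) + ‖gradf E‖ := by
        rw [norm_smul, Real.norm_of_nonneg hL, hVnorm]
        linarith
    _ = (L + 2 * Lf) * √p + ‖gradf E‖ := by ring

theorem dcra_one_step_gap_reduction_general (m p : ℕ) (hm : 0 < m) (hp : 0 < p)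
    (gradf : Matrix (Fin m) (Fin p) ℝ → Matrix (Fin m) (Fin p) ℝ)
    (Lf : ℝ) (hLf : 0 < Lf)
    (hlip : ∀ W W' : Matrix (Fin m) (Fin p) ℝ,
      frobNorm (gradf W - gradf W') ≤ Lf * frobNorm (W - W'))
    (ρ L : ℝ) (hρpos : 0 < ρ) (hL : 0 < L)
    (V0 : Matrix (Fin m) (Fin p) ℝ) (hV0 : unitCols V0)
    (u : Fin p → ℝ) (lam : ℝ) (htop : isTopEigen V0 lam u)
    (hzero : ∀ j, u j ≠ 0)
    (μ ϖ : ℝ) (hμ : μ = ⨅ j, |u j|)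
    (hϖ : ϖ = (L + 2 * Lf) * Real.sqrt p + frobNorm (gradf (Escaled m p)))
    (c0 : ℝ) (hc0 : c0 ∈ Set.Ioo (0 : ℝ) 1)
    (hρ : (L * p + ϖ) / (μ * c0) ≤ ρ) :
    (∀ j, ∃ i, Gmap gradf ρ L V0 u i j ≠ 0) ∧
    frobSq (normalizeCols (Gmap gradf ρ L V0 u))
        - specSq (normalizeCols (Gmap gradf ρ L V0 u)) ≤ c0 ^ 2 := by
  have : Nonempty (Fin p) := ⟨⟨0, hp⟩⟩
  obtain ⟨hc0, hc1⟩ := hc0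
  have hμ_pos : 0 < μ := hμ ▸ iInf_abs_pos hzero
  have hϖ_pos : 0 < ϖ := by
    have : 0 < √(p : ℝ) := Real.sqrt_pos.2 (Nat.cast_pos.2 hp)
    rw [hϖ, frobNorm_eq_norm]
    positivity
  have hmargin : ϖ ≤ c0 * (2 * ρ * μ - ϖ) := by
    rw [div_le_iff₀ (by positivity)] at hρ
    nlinarith [mul_le_of_le_one_left hϖ_pos.le hc1.le, (by positivity : (0 : ℝ) ≤ L * p)]
  have hD : 0 < 2 * ρ * μ - ϖ := pos_of_mul_pos_right (hϖ_pos.trans_le hmargin) hc0.le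
  have hlam : 1 ≤ lam := htop.one_le hV0
  have hcoef : ∀ j, 2 * ρ * μ ≤ √lam * |((2 * ρ) • u) j| := fun j => by
    rw [Pi.smul_apply, smul_eq_mul, abs_mul, abs_of_pos (by positivity : (0 : ℝ) < 2 * ρ)]
    have hμ_le : μ ≤ |u j| := hμ ▸ ciInf_le (Finite.bddBelow_range _) j
    exact (mul_le_mul_of_nonneg_left hμ_le (by positivity)).trans
      (le_mul_of_one_le_left (by positivity) (Real.one_le_sqrt.2 hlam))
  have hR : ‖L • V0 - gradf V0‖ ≤ ϖ := by
    rw [hϖ, frobNorm_eq_norm]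
    exact norm_smul_sub_le_of_lipschitz hm hLf.le hlip hV0 hL.le
  obtain ⟨hne, hle⟩ := frobSq_sub_specSq_normalizeCols_add_vecMulVec_le (L • V0 - gradf V0)
    (V0 *ᵥ u) ((2 * ρ) • u) (by rw [htop.sum_mulVec_sq, Real.sq_sqrt (by linarith)])
    (by positivity) hR hcoef (by linarith)
  have hc : 0 < 2 * ρ + L := by positivity
  rw [Gmap_eq_smul_add_vecMulVec, normalizeCols_smul (inv_pos.2 hc)]
  refine ⟨fun j => (hne j).imp fun i hi => mul_ne_zero (inv_ne_zero hc.ne') hi, hle.trans ?_⟩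
  rw [div_le_iff₀ (by positivity), ← mul_pow]
  gcongr

/-- Lemma 1, one-step gap reduction. If every entry of the unit top eigenvector
`u₁(V⁰)` of `(V⁰)ᵀV⁰` is nonzero, `μ = min_j |u₁(V⁰)_j|`, `ϖ = (L + 2L_f̃)√p + ‖∇f̃(E/√m)‖_F`,
`c₀ ∈ (0,1)` and `ρ ≥ (Lp + ϖ)/(μc₀)`, then every column of `G(V⁰)` is nonzero and the update
`V¹ = Proj_S(G(V⁰))` satisfies `‖V¹‖_F² − ‖V¹‖² ≤ c₀²`. -/
theorem dcra_one_step_gap_reduction (m p : ℕ) (hm : 0 < m) (hp : 0 < p)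
    (ftilde : Matrix (Fin m) (Fin p) ℝ → ℝ)
    (gradf : Matrix (Fin m) (Fin p) ℝ → Matrix (Fin m) (Fin p) ℝ)
    (Lf : ℝ) (hLf : 0 < Lf)
    (hderiv : ∀ W : Matrix (Fin m) (Fin p) ℝ, HasFDerivAt ftilde (frobCLM (gradf W)) W)
    (hlip : ∀ W W' : Matrix (Fin m) (Fin p) ℝ,
      frobNorm (gradf W - gradf W') ≤ Lf * frobNorm (W - W'))
    (ρ L : ℝ) (hρpos : 0 < ρ) (hL : 0 < L)
    (V0 : Matrix (Fin m) (Fin p) ℝ) (hV0 : unitCols V0)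
    (u : Fin p → ℝ) (lam : ℝ) (htop : isTopEigen V0 lam u)
    (hzero : ∀ j, u j ≠ 0)
    (μ ϖ : ℝ) (hμ : μ = ⨅ j, |u j|)
    (hϖ : ϖ = (L + 2 * Lf) * Real.sqrt p + frobNorm (gradf (Escaled m p)))
    (c0 : ℝ) (hc0 : c0 ∈ Set.Ioo (0 : ℝ) 1)
    (hρ : (L * p + ϖ) / (μ * c0) ≤ ρ) :
    (∀ j, ∃ i, Gmap gradf ρ L V0 u i j ≠ 0) ∧
    frobSq (normalizeCols (Gmap gradf ρ L V0 u))
        - specSq (normalizeCols (Gmap gradf ρ L V0 u)) ≤ c0 ^ 2 :=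
  dcra_one_step_gap_reduction_general m p hm hp gradf Lf hLf hlip ρ L hρpos hL V0 hV0 u lam htop
    hzero μ ϖ hμ hϖ c0 hc0 hρ

end
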